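/- Let S be a commutative ordered monoid with transitive auxiliary relation ≪ refining ≤ and compatible with addition. Suppose there exist M₁, L₁ ∈ ℕ (both ≥ 1) such that: (a) for every N ≥ 1 and x' ≪ x there exists z with z ≪ x, x' ≪ N • z, and N • z ≪ M₁ • x; (b) for every pair x' ≪ x and every m there exist y₀, …, y_m with y₀ + ⋯ + y_m ≤ x and x' ≪ L₁ • yⱼ for all j; and (c) S has m-comparison: if (k+1) • u ≤ k • vⱼ for some k and all j = 0, …, m, then u ≤ v₀ + ⋯ + v_m. Then S is n-almost divisible for n = 2 L₁ M₁: for every x' ≪ x and every k ≥ 1 there exists z' ∈ S with k • z' ≤ x and x' ≤ (k+1)(n+1) • z'. -/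

import Mathlib

/-! Write `A = k * (M₁ * L₁) + s` with `s ≥ 1` (possible for `A = (k + 1) * (2 * L₁ * M₁ + 1)`)
and interpolate `x' ≪ x'' ≪ x`. Condition (b) spreads `x` as `y₀ + ⋯ + y_m ≤ x` with
`x'' ≪ L₁ • yⱼ`, and condition (a) gives `z ≪ x''` with `x' ≪ (s * A) • z ≪ M₁ • x''`.
Then `z' = s • z` satisfies `x' ≤ A • z'`, and the two bounds `z ≤ L₁ • yⱼ`,
`(s * A) • z ≤ (M₁ * L₁) • yⱼ` together give `k • z' ≤ₛ yⱼ` for every `j`, so `m`-comparison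
yields `k • z' ≤ ∑ yⱼ ≤ x`. -/

section

variable {S : Type*} [AddCommMonoid S] [PartialOrder S] [IsOrderedAddMonoid S]

theorem succ_nsmul_le_nsmul_of_le_of_nsmul_le {y z : S} {k s L M : ℕ}
    (hz : z ≤ L • y) (hsz : (s * (k * M + s)) • z ≤ M • y) :
    (k * L * (k * M + s) + 1) • (k • s • z) ≤ (k * L * (k * M + s)) • y :=
  calc (k * L * (k * M + s) + 1) • (k • s • z)
      = (k ^ 2 * L) • ((s * (k * M + s)) • z) + (k * s) • z := by
        simp only [smul_smul, ← add_smul]; ring_nf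
    _ ≤ (k ^ 2 * L) • (M • y) + (k * s) • (L • y) := by gcongr
    _ = (k * L * (k * M + s)) • y := by
        simp only [smul_smul, ← add_smul]; ring_nf

theorem exists_nsmul_le_and_le_nsmul_of_conditions
    (wb : S → S → Prop)
    (hwb_trans : ∀ a b c : S, wb a b → wb b c → wb a c)
    (hwb_le : ∀ a b : S, wb a b → a ≤ b)
    (hwb_smul : ∀ (n : ℕ) (a b : S), wb a b → wb (n • a) (n • b))
    (hinterp : ∀ a b : S, wb a b → ∃ c : S, wb a c ∧ wb c b)
    {m M₁ L₁ : ℕ} (hL₁ : 1 ≤ L₁)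
    (ha : ∀ N : ℕ, 1 ≤ N → ∀ x' x : S, wb x' x →
      ∃ z : S, wb z x ∧ wb x' (N • z) ∧ wb (N • z) (M₁ • x))
    (hb : ∀ x' x : S, wb x' x →
      ∃ y : Fin (m + 1) → S, (∑ j, y j) ≤ x ∧ ∀ j, wb x' (L₁ • y j))
    (hc : ∀ (u : S) (v : Fin (m + 1) → S),
      (∀ j, ∃ k : ℕ, 1 ≤ k ∧ (k + 1) • u ≤ k • v j) → u ≤ ∑ j, v j)
    {x' x : S} (hx : wb x' x) {k A : ℕ} (hk : 1 ≤ k) (hA : k * (M₁ * L₁) < A) :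
    ∃ z' : S, k • z' ≤ x ∧ x' ≤ A • z' := by
  obtain ⟨s, rfl⟩ : ∃ s, A = k * (M₁ * L₁) + s := ⟨A - k * (M₁ * L₁), by omega⟩
  have hs : 1 ≤ s := by omega
  obtain ⟨x'', hx'x'', hx''x⟩ := hinterp x' x hx
  obtain ⟨y, hy_sum, hx''y⟩ := hb x'' x hx''x
  obtain ⟨z, hzx'', hx'z, hzM₁⟩ :=
    ha (s * (k * (M₁ * L₁) + s)) (Nat.one_le_iff_ne_zero.mpr (by positivity)) x' x'' hx'x''
  refine ⟨s • z, ?_, ?_⟩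
  · have hdom : ∀ j, ∃ K : ℕ, 1 ≤ K ∧ (K + 1) • (k • s • z) ≤ K • y j := fun j =>
      ⟨k * L₁ * (k * (M₁ * L₁) + s), Nat.one_le_iff_ne_zero.mpr (by positivity),
        succ_nsmul_le_nsmul_of_le_of_nsmul_le (hwb_le _ _ (hwb_trans _ _ _ hzx'' (hx''y j)))
          (by simpa only [smul_smul] using
            hwb_le _ _ (hwb_trans _ _ _ hzM₁ (hwb_smul M₁ _ _ (hx''y j))))⟩
    exact (hc _ y hdom).trans hy_sum
  · rw [smul_smul, mul_comm]
    exact hwb_le _ _ hx'z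

end

theorem almost_divisible_of_conditions_general {S : Type*} [AddCommMonoid S] [PartialOrder S] [IsOrderedAddMonoid S]
    (wb : S → S → Prop)
    (hwb_trans : ∀ a b c : S, wb a b → wb b c → wb a c)
    (hwb_le : ∀ a b : S, wb a b → a ≤ b)
    (hwb_smul : ∀ (n : ℕ) (a b : S), wb a b → wb (n • a) (n • b))
    (hinterp : ∀ a b : S, wb a b → ∃ c : S, wb a c ∧ wb c b)
    (m : ℕ) (M₁ L₁ : ℕ) (hL₁ : 1 ≤ L₁)
    -- (a) divisibility with remainder control
    (ha : ∀ N : ℕ, 1 ≤ N → ∀ x' x : S, wb x' x →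
      ∃ z : S, wb z x ∧ wb x' (N • z) ∧ wb (N • z) (M₁ • x))
    -- (b) halving-type condition
    (hb : ∀ x' x : S, wb x' x →
      ∃ y : Fin (m + 1) → S, (∑ j, y j) ≤ x ∧ ∀ j, wb x' (L₁ • y j))
    -- (c) m-comparison
    (hc : ∀ (u : S) (v : Fin (m + 1) → S),
      (∀ j, ∃ k : ℕ, 1 ≤ k ∧ (k + 1) • u ≤ k • v j) → u ≤ ∑ j, v j) :
    ∀ x' x : S, wb x' x → ∀ k : ℕ, 1 ≤ k →
      ∃ z' : S, k • z' ≤ x ∧ x' ≤ ((k + 1) * (2 * L₁ * M₁ + 1)) • z' := by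
  intro x' x hx k hk
  refine exists_nsmul_le_and_le_nsmul_of_conditions wb hwb_trans hwb_le hwb_smul hinterp hL₁
    ha hb hc hx hk ?_
  nlinarith [Nat.zero_le (L₁ * M₁)]

/-- Abstract (ii) ⟹ (iii) step of Theorem 5.5: a positively ordered abstract
Cuntz semigroup satisfying the divisibility condition (a), the halving-type
condition (b), and `m`-comparison (c) is `n`-almost divisible for
`n = 2 * L₁ * M₁`. -/
theorem almost_divisible_of_conditions {S : Type*} [AddCommMonoid S] [PartialOrder S] [IsOrderedAddMonoid S]
    (wb : S → S → Prop)
    (hwb_trans : ∀ a b c : S, wb a b → wb b c → wb a c)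
    (hwb_le : ∀ a b : S, wb a b → a ≤ b)
    (hwb_add : ∀ a b c d : S, wb a b → wb c d → wb (a + c) (b + d))
    (hwb_smul : ∀ (n : ℕ) (a b : S), wb a b → wb (n • a) (n • b))
    (hinterp : ∀ a b : S, wb a b → ∃ c : S, wb a c ∧ wb c b)
    (m : ℕ) (M₁ L₁ : ℕ) (hM₁ : 1 ≤ M₁) (hL₁ : 1 ≤ L₁)
    -- (a) divisibility with remainder control
    (ha : ∀ N : ℕ, 1 ≤ N → ∀ x' x : S, wb x' x →
      ∃ z : S, wb z x ∧ wb x' (N • z) ∧ wb (N • z) (M₁ • x))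
    -- (b) halving-type condition
    (hb : ∀ x' x : S, wb x' x →
      ∃ y : Fin (m + 1) → S, (∑ j, y j) ≤ x ∧ ∀ j, wb x' (L₁ • y j))
    -- (c) m-comparison
    (hc : ∀ (u : S) (v : Fin (m + 1) → S),
      (∀ j, ∃ k : ℕ, 1 ≤ k ∧ (k + 1) • u ≤ k • v j) → u ≤ ∑ j, v j) :
    ∀ x' x : S, wb x' x → ∀ k : ℕ, 1 ≤ k →
      ∃ z' : S, k • z' ≤ x ∧ x' ≤ ((k + 1) * (2 * L₁ * M₁ + 1)) • z' :=
  almost_divisible_of_conditions_general wb hwb_trans hwb_le hwb_smul hinterp m M₁ L₁ hL₁ ha hb hc
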